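/- arXiv:1904.12459 — 6 statements merged into one kernel-verified Lean document; each statement's English description precedes it below -/
import Mathlib

section
/- Let γ be a real number with γ > 0, let k be a natural number with k ≥ 2 (i.e., k > 1), and let 0 < q < 1. Then the NGNB probability function is strictly log-concave: for every natural number y, w_{γ,k,q}(y) · w_{γ,k,q}(y+2) < (w_{γ,k,q}(y+1))^2. -/
/-- NGNB unnormalized weight: `w γ k q y = (C(y+k-1, y))^γ * q^y`,
where the binomial coefficient is raised to the real power `γ`. -/
noncomputable def ngnbWeight (γ : ℝ) (k : ℕ) (q : ℝ) (y : ℕ) : ℝ :=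
  ((y + k - 1).choose y : ℝ) ^ γ * q ^ y

lemma ngnb_choose_key (y m : ℕ) :
    (y + m + 1).choose y * (y + m + 3).choose (y + 2) <
      (y + m + 2).choose (y + 1) * (y + m + 2).choose (y + 1) := by
  set n := y + m + 1 with hn
  have h1 : (n + 1) * n.choose y = (n + 1).choose (y + 1) * (y + 1) :=
    Nat.add_one_mul_choose_eq n y
  have h2 : (n + 2) * (n + 1).choose (y + 1) = (n + 2).choose (y + 2) * (y + 2) :=
    Nat.add_one_mul_choose_eq (n + 1) (y + 1)
  have hB : 0 < (n + 1).choose (y + 1) := Nat.choose_pos (by omega)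
  have hidx : y + m + 3 = n + 2 := by omega
  have hidx2 : y + m + 2 = n + 1 := by omega
  rw [hidx, hidx2]
  apply Nat.lt_of_mul_lt_mul_left (a := (n + 1) * (y + 2))
  have key : (n + 1) * (y + 2) * (n.choose y * (n + 2).choose (y + 2)) =
      (y + 1) * (n + 2) * ((n + 1).choose (y + 1) * (n + 1).choose (y + 1)) := by
    calc (n + 1) * (y + 2) * (n.choose y * (n + 2).choose (y + 2))
        = ((n + 1) * n.choose y) * ((n + 2).choose (y + 2) * (y + 2)) := by ring
      _ = ((n + 1).choose (y + 1) * (y + 1)) * ((n + 2) * (n + 1).choose (y + 1)) := by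
          rw [h1, ← h2]
      _ = (y + 1) * (n + 2) * ((n + 1).choose (y + 1) * (n + 1).choose (y + 1)) := by ring
  rw [key]
  have hlt : (y + 1) * (n + 2) < (n + 1) * (y + 2) := by
    have : n = y + m + 1 := hn
    nlinarith
  exact mul_lt_mul_of_pos_right hlt (by positivity)

/-- For `γ > 0`, `k > 1` and `0 < q < 1`, the NGNB probability function is strictly
log-concave: `w(y) w(y+2) < w(y+1)^2` for every natural number `y`. -/
theorem ngnb_log_concave (γ : ℝ) (hγ : 0 < γ) (k : ℕ) (hk : 2 ≤ k)
    (q : ℝ) (hq0 : 0 < q) (hq1 : q < 1) (y : ℕ) :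
    ngnbWeight γ k q y * ngnbWeight γ k q (y + 2) < (ngnbWeight γ k q (y + 1)) ^ 2 := by
  obtain ⟨m, rfl⟩ : ∃ m, k = m + 2 := ⟨k - 2, by omega⟩
  have e1 : y + (m + 2) - 1 = y + m + 1 := by omega
  have e2 : y + 2 + (m + 2) - 1 = y + m + 3 := by omega
  have e3 : y + 1 + (m + 2) - 1 = y + m + 2 := by omega
  simp only [ngnbWeight, e1, e2, e3]
  set A : ℝ := ((y + m + 1).choose y : ℝ) with hA
  set C : ℝ := ((y + m + 3).choose (y + 2) : ℝ) with hC
  set B : ℝ := ((y + m + 2).choose (y + 1) : ℝ) with hB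
  have hA0 : 0 ≤ A := by positivity
  have hB0 : 0 ≤ B := by positivity
  have hC0 : 0 ≤ C := by positivity
  have hnat := ngnb_choose_key y m
  have hAC : A ^ γ * C ^ γ < B ^ γ * B ^ γ := by
    rw [← Real.mul_rpow hA0 hC0, ← Real.mul_rpow hB0 hB0]
    refine Real.rpow_lt_rpow (by positivity) ?_ hγ
    rw [hA, hB, hC]
    exact_mod_cast hnat
  have hq : (0 : ℝ) < q ^ y * q ^ (y + 2) := by positivity
  calc A ^ γ * q ^ y * (C ^ γ * q ^ (y + 2))
      = (A ^ γ * C ^ γ) * (q ^ y * q ^ (y + 2)) := by ring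
    _ < (B ^ γ * B ^ γ) * (q ^ y * q ^ (y + 2)) := mul_lt_mul_of_pos_right hAC hq
    _ = (B ^ γ * q ^ (y + 1)) ^ 2 := by ring
end

section
/- Let γ be a real number with γ < 0, let k be a natural number with k ≥ 2 (i.e., k > 1), and let 0 < q < 1. Then the NGNB probability function is strictly log-convex: for every natural number y, w_{γ,k,q}(y) · w_{γ,k,q}(y+2) > (w_{γ,k,q}(y+1))^2. -/
lemma ngnb_key (m y : ℕ) :
    (y + (m + 2) - 1).choose y * ((y + 2) + (m + 2) - 1).choose (y + 2)
      < (((y + 1) + (m + 2) - 1).choose (y + 1)) ^ 2 := by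
  set a := (y + m + 1).choose y with ha
  set b := (y + m + 2).choose (y + 1) with hb
  set c := (y + m + 3).choose (y + 2) with hc
  have h1 : (y + m + 2) * a = b * (y + 1) := by
    have := Nat.add_one_mul_choose_eq (y + m + 1) y
    simpa [ha, hb, Nat.succ_eq_add_one] using this
  have h2 : (y + m + 3) * b = c * (y + 2) := by
    have := Nat.add_one_mul_choose_eq (y + m + 2) (y + 1)
    simpa [hb, hc, Nat.succ_eq_add_one] using this
  have hb0 : 0 < b := Nat.choose_pos (by omega)
  have ha0 : 0 < a := Nat.choose_pos (by omega)
  have hc0 : 0 < c := Nat.choose_pos (by omega)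
  have key : a * c * ((y + m + 2) * (y + 2)) = b ^ 2 * ((y + 1) * (y + m + 3)) := by
    calc a * c * ((y + m + 2) * (y + 2)) = ((y + m + 2) * a) * (c * (y + 2)) := by ring
      _ = (b * (y + 1)) * ((y + m + 3) * b) := by rw [h1, ← h2]
      _ = b ^ 2 * ((y + 1) * (y + m + 3)) := by ring
  have hlt : (y + 1) * (y + m + 3) < (y + m + 2) * (y + 2) := by nlinarith
  have goal' : a * c * ((y + m + 2) * (y + 2)) < b ^ 2 * ((y + m + 2) * (y + 2)) := by
    rw [key]
    exact Nat.mul_lt_mul_of_pos_left hlt (by positivity)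
  have := Nat.lt_of_mul_lt_mul_right goal'
  simpa [ha, hb, hc] using by
    show (y + (m + 2) - 1).choose y * ((y + 2) + (m + 2) - 1).choose (y + 2)
        < (((y + 1) + (m + 2) - 1).choose (y + 1)) ^ 2
    have e1 : y + (m + 2) - 1 = y + m + 1 := by omega
    have e2 : (y + 2) + (m + 2) - 1 = y + m + 3 := by omega
    have e3 : (y + 1) + (m + 2) - 1 = y + m + 2 := by omega
    rw [e1, e2, e3]; exact this

/-- For `γ < 0`, `k > 1` and `0 < q < 1`, the NGNB probability function is strictly
log-convex: `w(y) w(y+2) > w(y+1)^2` for every natural number `y`. -/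
theorem ngnb_log_convex (γ : ℝ) (hγ : γ < 0) (k : ℕ) (hk : 2 ≤ k)
    (q : ℝ) (hq0 : 0 < q) (hq1 : q < 1) (y : ℕ) :
    ngnbWeight γ k q y * ngnbWeight γ k q (y + 2) > (ngnbWeight γ k q (y + 1)) ^ 2 := by
  obtain ⟨m, rfl⟩ : ∃ m, k = m + 2 := ⟨k - 2, by omega⟩
  unfold ngnbWeight
  set a : ℝ := ((y + (m + 2) - 1).choose y : ℝ) with ha
  set b : ℝ := (((y + 1) + (m + 2) - 1).choose (y + 1) : ℝ) with hb
  set c : ℝ := (((y + 2) + (m + 2) - 1).choose (y + 2) : ℝ) with hc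
  have ha0 : 0 < a := by rw [ha]; exact_mod_cast Nat.choose_pos (by omega)
  have hb0 : 0 < b := by rw [hb]; exact_mod_cast Nat.choose_pos (by omega)
  have hc0 : 0 < c := by rw [hc]; exact_mod_cast Nat.choose_pos (by omega)
  have hkey : a * c < b ^ 2 := by
    rw [ha, hb, hc]
    exact_mod_cast ngnb_key m y
  have hac0 : 0 < a * c := mul_pos ha0 hc0
  have hpow : (b ^ 2) ^ γ < (a * c) ^ γ := Real.rpow_lt_rpow_of_neg hac0 hkey hγ
  have h1 : (a * c) ^ γ = a ^ γ * c ^ γ := Real.mul_rpow ha0.le hc0.le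
  have h2 : (b ^ 2) ^ γ = (b ^ γ) ^ 2 := by
    rw [← Real.rpow_natCast b 2, ← Real.rpow_natCast (b ^ γ) 2,
      ← Real.rpow_mul hb0.le, ← Real.rpow_mul hb0.le, mul_comm]
  have hq : (0:ℝ) < q ^ y * q ^ (y + 2) := by positivity
  have hqe : q ^ y * q ^ (y + 2) = (q ^ (y + 1)) ^ 2 := by ring
  calc (b ^ γ * q ^ (y + 1)) ^ 2 = (b ^ γ) ^ 2 * (q ^ (y + 1)) ^ 2 := by ring
    _ = (b ^ 2) ^ γ * (q ^ y * q ^ (y + 2)) := by rw [h2, hqe]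
    _ < (a * c) ^ γ * (q ^ y * q ^ (y + 2)) := by
        exact mul_lt_mul_of_pos_right hpow hq
    _ = a ^ γ * q ^ y * (c ^ γ * q ^ (y + 2)) := by rw [h1]; ring
end

section
/- Let γ > 0 be real, let k ≥ 2 be a natural number, and let 0 < q < 1. Define the failure rate of the NGNB(γ,k,q) distribution by r(y) = w_{γ,k,q}(y) / Σ_{j=y}^∞ w_{γ,k,q}(j). Then r is strictly increasing: r(y) < r(y+1) for every natural number y (the NGNB has increasing failure rate, IFR). -/
/-!
The successive weight ratio `w (n+1) / w n = ((n+k)/(n+1))^γ q` decreases strictly to `q < 1`,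
so the weights are summable and strictly log-concave. Hence each term of the tail beyond `y+1`
is at most `w (y+1) / w y` times the corresponding term of the tail beyond `y`, strictly so for
one term, and cross-multiplying gives `r y < r (y+1)`.
-/

open Filter Topology

/-- Failure rate of the NGNB distribution: `r(y) = w(y) / Σ_{j ≥ y} w(j)`. -/
noncomputable def ngnbFailureRate (γ : ℝ) (k : ℕ) (q : ℝ) (y : ℕ) : ℝ :=
  ngnbWeight γ k q y / ∑' j : ℕ, ngnbWeight γ k q (y + j)

section FailureRate

variable {w : ℕ → ℝ}

lemma tsum_shift_succ_lt_ratio_mul_tsum (hpos : ∀ n, 0 < w n) (hsum : Summable w)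
    (hanti : StrictAnti fun n => w (n + 1) / w n) (y : ℕ) :
    ∑' j, w (y + 1 + j) < w (y + 1) / w y * ∑' j, w (y + j) := by
  have hsum_shift : ∀ m, Summable fun j => w (m + j) := fun m =>
    hsum.comp_injective (add_right_injective m)
  have hstep : ∀ j, w (y + 1 + j) = w (y + j + 1) / w (y + j) * w (y + j) := fun j => by
    rw [div_mul_cancel₀ _ (hpos _).ne', add_right_comm]
  rw [← tsum_mul_left]
  refine (hsum_shift (y + 1)).tsum_lt_tsum (i := 1) (fun j => ?_) ?_ ((hsum_shift y).mul_left _)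
  · rw [hstep]
    exact mul_le_mul_of_nonneg_right (hanti.antitone (Nat.le_add_right y j)) (hpos _).le
  · rw [hstep]
    exact mul_lt_mul_of_pos_right (hanti (Nat.lt_succ_self y)) (hpos _)

theorem div_tsum_shift_lt_succ_of_strictAnti_ratio (hpos : ∀ n, 0 < w n) (hsum : Summable w)
    (hanti : StrictAnti fun n => w (n + 1) / w n) (y : ℕ) :
    w y / ∑' j, w (y + j) < w (y + 1) / ∑' j, w (y + 1 + j) := by
  have htail_pos : ∀ m, 0 < ∑' j, w (m + j) := fun m =>
    (hsum.comp_injective (add_right_injective m)).tsum_pos (fun j => (hpos _).le) 0 (hpos _)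
  rw [div_lt_div_iff₀ (htail_pos y) (htail_pos (y + 1))]
  calc w y * ∑' j, w (y + 1 + j)
      < w y * (w (y + 1) / w y * ∑' j, w (y + j)) :=
        mul_lt_mul_of_pos_left (tsum_shift_succ_lt_ratio_mul_tsum hpos hsum hanti y) (hpos y)
    _ = w (y + 1) * ∑' j, w (y + j) := by
        rw [← mul_assoc, mul_div_cancel₀ _ (hpos y).ne']

end FailureRate

lemma strictAnti_natCast_add_div_add_one {c : ℝ} (hc : 1 < c) :
    StrictAnti fun n : ℕ => (n + c) / (n + 1) := by
  refine strictAnti_nat_of_succ_lt fun n => ?_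
  push_cast
  rw [div_lt_div_iff₀ (by positivity) (by positivity)]
  nlinarith

lemma tendsto_natCast_add_div_add_one (c : ℝ) :
    Tendsto (fun n : ℕ => (n + c) / (n + 1)) atTop (𝓝 1) := by
  simpa [add_comm] using tendsto_add_mul_div_add_mul_atTop_nhds c 1 1 (one_ne_zero (α := ℝ))

section NGNB

variable {γ : ℝ} {k : ℕ} {q : ℝ}

lemma ngnbWeight_pos (hk : 0 < k) (hq : 0 < q) (y : ℕ) : 0 < ngnbWeight γ k q y := by
  have hchoose : 0 < (y + k - 1).choose y := Nat.choose_pos (by omega)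
  exact mul_pos (Real.rpow_pos_of_pos (by exact_mod_cast hchoose) γ) (pow_pos hq y)

lemma ngnbWeight_succ (hk : 0 < k) (n : ℕ) :
    ngnbWeight γ k q (n + 1) = ((n + k) / (n + 1)) ^ γ * q * ngnbWeight γ k q n := by
  have hchoose : ((n + k).choose (n + 1) : ℝ) = (n + k) / (n + 1) * (n + k - 1).choose n := by
    have h := Nat.add_one_mul_choose_eq (n + k - 1) n
    rw [show n + k - 1 + 1 = n + k by omega] at h
    have h' : ((n + k : ℕ) : ℝ) * (n + k - 1).choose n = (n + k).choose (n + 1) * (n + 1) := by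
      exact_mod_cast h
    push_cast at h'
    field_simp
    linarith
  rw [ngnbWeight, ngnbWeight, show n + 1 + k - 1 = n + k by omega, hchoose,
    Real.mul_rpow (by positivity) (by positivity), pow_succ]
  ring

lemma ngnbWeight_succ_div (hk : 0 < k) (hq : 0 < q) (n : ℕ) :
    ngnbWeight γ k q (n + 1) / ngnbWeight γ k q n = ((n + k) / (n + 1)) ^ γ * q := by
  rw [ngnbWeight_succ hk, mul_div_cancel_right₀ _ (ngnbWeight_pos hk hq n).ne']

lemma summable_ngnbWeight (hk : 0 < k) (hq0 : 0 < q) (hq1 : q < 1) :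
    Summable (ngnbWeight γ k q) := by
  refine summable_of_ratio_test_tendsto_lt_one hq1
    (Eventually.of_forall fun n => (ngnbWeight_pos hk hq0 n).ne') ?_
  have hpow : Tendsto (fun x : ℝ => x ^ γ) (𝓝 1) (𝓝 1) := by
    simpa using (Real.continuousAt_rpow_const 1 γ (Or.inl one_ne_zero)).tendsto
  have hlim := (hpow.comp (tendsto_natCast_add_div_add_one k)).mul_const q
  rw [one_mul] at hlim
  refine hlim.congr fun n => ?_
  rw [Real.norm_of_nonneg (ngnbWeight_pos hk hq0 _).le,
    Real.norm_of_nonneg (ngnbWeight_pos hk hq0 _).le, ngnbWeight_succ_div hk hq0]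
  rfl

lemma strictAnti_ngnbWeight_succ_div (hγ : 0 < γ) (hk : 2 ≤ k) (hq : 0 < q) :
    StrictAnti fun n => ngnbWeight γ k q (n + 1) / ngnbWeight γ k q n := by
  have hk1 : (1 : ℝ) < k := by exact_mod_cast hk
  intro m n hmn
  simp only [ngnbWeight_succ_div (by omega : 0 < k) hq]
  exact mul_lt_mul_of_pos_right
    (Real.rpow_lt_rpow (by positivity) (strictAnti_natCast_add_div_add_one hk1 hmn) hγ) hq

end NGNB

/-- For `γ > 0`, `k > 1` and `0 < q < 1`, the NGNB distribution has strictly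
increasing failure rate (IFR): `r(y) < r(y+1)` for every natural number `y`. -/
theorem ngnb_IFR (γ : ℝ) (hγ : 0 < γ) (k : ℕ) (hk : 2 ≤ k)
    (q : ℝ) (hq0 : 0 < q) (hq1 : q < 1) (y : ℕ) :
    ngnbFailureRate γ k q y < ngnbFailureRate γ k q (y + 1) :=
  div_tsum_shift_lt_succ_of_strictAnti_ratio (ngnbWeight_pos (by omega) hq0)
    (summable_ngnbWeight (by omega) hq0 hq1) (strictAnti_ngnbWeight_succ_div hγ hk hq0) y
end

section
/- Let γ be a real number, let λ > 0 be real, and fix a natural number y. Then the limit as k → ∞ (k a natural number) of (C(y+k-1, y))^γ · (λ · k^{-γ})^y equals λ^y / (y!)^γ, where powers of positive reals by γ are real powers. -/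
/-!
`C(y+k-1, y) = k(k+1)⋯(k+y-1) / y!` is a monic polynomial of degree `y` in `k` divided by `y!`,
so `C(y+k-1, y) / k^y → 1 / y!`. For `k > 0` the weight equals `λ^y (C(y+k-1, y) / k^y)^γ`,
and continuity of `t ↦ t^γ` at `1 / y! > 0` gives the limit `λ^y / (y!)^γ`.
-/

open Filter Topology Polynomial Nat

theorem Nat.cast_choose_add_sub_one_eq_ascFactorial_div (K : Type*) [Field K] [CharZero K]
    (n k : ℕ) : ((k + n - 1).choose k : K) = n.ascFactorial k / k ! := by
  rw [eq_div_iff (Nat.cast_ne_zero.2 k.factorial_ne_zero), add_comm, mul_comm]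
  exact_mod_cast (n.ascFactorial_eq_factorial_mul_choose' k).symm

theorem tendsto_ascFactorial_div_pow_atTop (𝕜 : Type*) [NormedField 𝕜] [LinearOrder 𝕜]
    [IsStrictOrderedRing 𝕜] [OrderTopology 𝕜] [Archimedean 𝕜] (k : ℕ) :
    Tendsto (fun n : ℕ => (n.ascFactorial k : 𝕜) / (n : 𝕜) ^ k) atTop (𝓝 1) := by
  have h := div_tendsto_atTop_leadingCoeff_div_of_degree_eq (ascPochhammer 𝕜 k) (X ^ k)
    (by rw [degree_X_pow, degree_eq_natDegree (monic_ascPochhammer 𝕜 k).ne_zero,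
      ascPochhammer_natDegree]) |>.comp tendsto_natCast_atTop_atTop
  simpa [Function.comp_def, (monic_ascPochhammer 𝕜 k).leadingCoeff,
    ascPochhammer_nat_eq_natCast_ascFactorial] using h

theorem tendsto_choose_add_sub_one_div_pow_atTop (k : ℕ) :
    Tendsto (fun n : ℕ => ((k + n - 1).choose k : ℝ) / (n : ℝ) ^ k) atTop (𝓝 (k ! : ℝ)⁻¹) := by
  simpa only [Nat.cast_choose_add_sub_one_eq_ascFactorial_div, div_right_comm _ (k ! : ℝ),
    one_div] using (tendsto_ascFactorial_div_pow_atTop ℝ k).div_const (k ! : ℝ)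

theorem Real.rpow_mul_mul_rpow_neg_pow {a x : ℝ} (ha : 0 ≤ a) (hx : 0 < x) (c γ : ℝ) (n : ℕ) :
    a ^ γ * (c * x ^ (-γ)) ^ n = c ^ n * (a / x ^ n) ^ γ := by
  rw [mul_pow, Real.div_rpow ha (by positivity), ← Real.rpow_mul_natCast hx.le,
    ← Real.rpow_natCast_mul hx.le, neg_mul, Real.rpow_neg hx.le, mul_comm γ]
  ring

theorem ngnb_weight_tendsto_comPoisson_weight_general (γ : ℝ) (lam : ℝ) (y : ℕ) :
    Tendsto
      (fun k : ℕ => ((y + k - 1).choose y : ℝ) ^ γ * (lam * (k : ℝ) ^ (-γ)) ^ y)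
      atTop (nhds (lam ^ y / (Nat.factorial y : ℝ) ^ γ)) := by
  have h := ((tendsto_choose_add_sub_one_div_pow_atTop y).rpow_const
    (p := γ) (Or.inl (by positivity))).const_mul (lam ^ y)
  rw [Real.inv_rpow (by positivity), ← div_eq_mul_inv] at h
  refine h.congr' ?_
  filter_upwards [eventually_gt_atTop 0] with k hk
  exact (Real.rpow_mul_mul_rpow_neg_pow (by positivity) (by exact_mod_cast hk) lam γ y).symm

/-- Let `γ` be real, `λ > 0` real, and fix a natural number `y`. Then
`(C(y+k-1, y))^γ · (λ · k^{-γ})^y → λ^y / (y!)^γ` as the natural number `k → ∞`;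
i.e., each unnormalized NGNB weight with `q = λ k^{-γ}` converges to the
corresponding unnormalized COM-Poisson weight. -/
theorem ngnb_weight_tendsto_comPoisson_weight (γ : ℝ) (lam : ℝ) (hlam : 0 < lam) (y : ℕ) :
    Tendsto
      (fun k : ℕ => ((y + k - 1).choose y : ℝ) ^ γ * (lam * (k : ℝ) ^ (-γ)) ^ y)
      atTop (nhds (lam ^ y / (Nat.factorial y : ℝ) ^ γ)) :=
  ngnb_weight_tendsto_comPoisson_weight_general γ lam y
end

section
/- Let γ > 0 and λ > 0 be real. For each natural number k ≥ 1 set q_k = λ · k^{-γ}. Then (for all sufficiently large k so that 0 < q_k < 1) the NGNB(γ,k,q_k) probability of each fixed y converges to the COM-Poisson(λ,γ) probability: lim_{k→∞} [ (C(y+k-1, y))^γ (q_k)^y / Σ_{j=0}^∞ (C(j+k-1, j))^γ (q_k)^j ] = (λ^y/(y!)^γ) / Σ_{j=0}^∞ (λ^j/(j!)^γ). In particular the normalizing constants converge: Σ_{j=0}^∞ (C(j+k-1, j))^γ (q_k)^j → Σ_{j=0}^∞ λ^j/(j!)^γ as k → ∞. -/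
open Filter

-- L1
lemma asc_div_tendsto (y : ℕ) :
    Tendsto (fun k : ℕ => (Nat.ascFactorial k y : ℝ) / (k : ℝ) ^ y) atTop (nhds 1) := by
  induction y with
  | zero => simp
  | succ y ih =>
    have h1 : Tendsto (fun k : ℕ => ((k : ℝ) + y) / (k : ℝ)) atTop (nhds 1) := by
      have h2 : Tendsto (fun k : ℕ => 1 + (y : ℝ) / (k : ℝ)) atTop (nhds (1 + 0)) :=
        tendsto_const_nhds.add (tendsto_const_div_atTop_nhds_zero_nat _)
      rw [add_zero] at h2
      refine h2.congr' ?_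
      filter_upwards [eventually_ge_atTop 1] with k hk
      have : (k : ℝ) ≠ 0 := by positivity
      field_simp
    have := h1.mul ih
    rw [one_mul] at this
    refine this.congr' ?_
    filter_upwards [eventually_ge_atTop 1] with k hk
    have hk0 : (k : ℝ) ≠ 0 := by positivity
    rw [Nat.ascFactorial_succ, div_mul_div_comm]
    push_cast
    rw [pow_succ]
    ring

-- L2
lemma weight_eq (γ : ℝ) (lam : ℝ) (hlam : 0 < lam) (y k : ℕ) (hk : 1 ≤ k) :
    ngnbWeight γ k (lam * (k : ℝ) ^ (-γ)) y =
      lam ^ y / (Nat.factorial y : ℝ) ^ γ *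
        ((Nat.ascFactorial k y : ℝ) / (k : ℝ) ^ y) ^ γ := by
  have hk0 : (0:ℝ) < (k:ℝ) := by exact_mod_cast hk
  have hchoose : ((y + k - 1).choose y : ℝ) =
      (Nat.ascFactorial k y : ℝ) / (Nat.factorial y : ℝ) := by
    have h := Nat.ascFactorial_eq_factorial_mul_choose' k y
    have : (y + k - 1) = (k + y - 1) := by omega
    rw [this]
    field_simp
    exact_mod_cast (mul_comm (Nat.factorial y) _ ▸ h.symm)
  rw [ngnbWeight, hchoose, mul_pow, mul_comm]
  have h1 : ((k:ℝ) ^ (-γ)) ^ y = ((k:ℝ) ^ y) ^ (-γ) := by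
    rw [← Real.rpow_natCast ((k:ℝ) ^ (-γ)) y, ← Real.rpow_natCast (k:ℝ) y,
      ← Real.rpow_mul hk0.le, ← Real.rpow_mul hk0.le, mul_comm]
  rw [h1, Real.rpow_neg (by positivity), Real.div_rpow (by positivity) (by positivity),
    Real.div_rpow (by positivity) (by positivity)]
  field_simp

-- L3
lemma weight_tendsto (γ : ℝ) (hγ : 0 < γ) (lam : ℝ) (hlam : 0 < lam) (y : ℕ) :
    Tendsto (fun k : ℕ => ngnbWeight γ k (lam * (k : ℝ) ^ (-γ)) y) atTop
      (nhds (lam ^ y / (Nat.factorial y : ℝ) ^ γ)) := by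
  have h1 := (asc_div_tendsto y).rpow_const (Or.inr hγ.le)
  rw [Real.one_rpow] at h1
  have h2 := h1.const_mul (lam ^ y / (Nat.factorial y : ℝ) ^ γ)
  rw [mul_one] at h2
  refine h2.congr' ?_
  filter_upwards [eventually_ge_atTop 1] with k hk
  exact (weight_eq γ lam hlam y k hk).symm

-- L4 general summability
lemma summable_aux (γ : ℝ) (hγ : 0 < γ) (c : ℝ) (hc : 0 < c) :
    Summable (fun y : ℕ => c ^ y / (Nat.factorial y : ℝ) ^ γ) := by
  refine summable_of_ratio_norm_eventually_le (r := 1/2) (by norm_num) ?_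
  have h : Tendsto (fun y : ℕ => ((y : ℝ) + 1) ^ γ) atTop atTop := by
    have := (tendsto_rpow_atTop hγ).comp
      (tendsto_atTop_add_const_right atTop 1 tendsto_natCast_atTop_atTop)
    exact this
  filter_upwards [h.eventually_ge_atTop (2 * c)] with y hy
  have hy1 : (0:ℝ) < ((y:ℝ)+1) ^ γ := by positivity
  have hfac : (0:ℝ) < (Nat.factorial y : ℝ) := by positivity
  rw [Real.norm_of_nonneg (by positivity), Real.norm_of_nonneg (by positivity)]
  have hfs : ((Nat.factorial (y+1) : ℝ)) ^ γ = ((y:ℝ)+1) ^ γ * (Nat.factorial y : ℝ) ^ γ := by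
    rw [Nat.factorial_succ]
    push_cast
    rw [Real.mul_rpow (by positivity) (by positivity)]
  rw [hfs, pow_succ]
  rw [div_le_iff₀ (by positivity)]
  have key : c ≤ (1/2) * (((y:ℝ)+1) ^ γ) := by linarith
  calc c ^ y * c ≤ c ^ y * ((1/2) * (((y:ℝ)+1) ^ γ)) := by
        exact mul_le_mul_of_nonneg_left key (by positivity)
    _ = 1 / 2 * (c ^ y / (Nat.factorial y : ℝ) ^ γ) * (((y:ℝ)+1) ^ γ * (Nat.factorial y:ℝ) ^ γ) := by
        field_simp

lemma pow_rpow_comm (x : ℝ) (hx : 0 ≤ x) (γ : ℝ) (y : ℕ) :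
    (x ^ y) ^ γ = (x ^ γ) ^ y := by
  rw [← Real.rpow_natCast x y, ← Real.rpow_mul hx, mul_comm, Real.rpow_mul hx,
    Real.rpow_natCast]

-- choose ≤ 2^n
lemma choose_le_two_pow' (n m : ℕ) : n.choose m ≤ 2 ^ n := by
  rcases le_or_gt m n with h | h
  · calc n.choose m ≤ ∑ i ∈ Finset.range (n+1), n.choose i :=
        Finset.single_le_sum (fun i _ => Nat.zero_le _)
          (Finset.mem_range.mpr (Nat.lt_succ_of_le h))
    _ = 2 ^ n := Nat.sum_range_choose n
  · rw [Nat.choose_eq_zero_of_lt h]; exact Nat.zero_le _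

-- L5: the bound
lemma weight_bound (γ : ℝ) (hγ : 0 < γ) (lam : ℝ) (hlam : 0 < lam) :
    ∀ᶠ k : ℕ in atTop, ∀ y : ℕ,
      ‖ngnbWeight γ k (lam * (k : ℝ) ^ (-γ)) y‖ ≤
        (2 ^ γ * lam) ^ y / (Nat.factorial y : ℝ) ^ γ + (1/2) ^ y := by
  have h : Tendsto (fun k : ℕ => ((k : ℝ)) ^ γ) atTop atTop :=
    (tendsto_rpow_atTop hγ).comp tendsto_natCast_atTop_atTop
  filter_upwards [eventually_ge_atTop 1, h.eventually_ge_atTop (2 * (4 ^ γ * lam))]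
    with k hk1 hk2
  intro y
  have hk0 : (0:ℝ) < (k:ℝ) := by exact_mod_cast hk1
  have hq : (0:ℝ) < lam * (k:ℝ) ^ (-γ) := by positivity
  have hwnn : 0 ≤ ngnbWeight γ k (lam * (k : ℝ) ^ (-γ)) y := by
    unfold ngnbWeight; positivity
  rw [Real.norm_of_nonneg hwnn]
  rcases le_or_gt y k with hyk | hyk
  · -- y ≤ k : use ascFactorial bound
    have hb2 : (0:ℝ) ≤ (1/2:ℝ) ^ y := by positivity
    have hasc : (Nat.ascFactorial k y : ℝ) ≤ ((2*k : ℕ) : ℝ) ^ y := by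
      have h1 : Nat.ascFactorial k y ≤ (k - 1 + y) ^ y := by
        have := Nat.ascFactorial_le_pow_add (k-1) y
        rwa [show k - 1 + 1 = k by omega] at this
      have h2 : (k - 1 + y) ^ y ≤ (2*k) ^ y := Nat.pow_le_pow_left (by omega) y
      exact_mod_cast h1.trans h2
    have hr : (Nat.ascFactorial k y : ℝ) / (k : ℝ) ^ y ≤ 2 ^ y := by
      rw [div_le_iff₀ (by positivity)]
      calc (Nat.ascFactorial k y : ℝ) ≤ ((2*k : ℕ) : ℝ) ^ y := hasc
        _ = 2 ^ y * (k:ℝ) ^ y := by push_cast; rw [mul_pow]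
    have hrg : ((Nat.ascFactorial k y : ℝ) / (k : ℝ) ^ y) ^ γ ≤ ((2:ℝ) ^ y) ^ γ :=
      Real.rpow_le_rpow (by positivity) hr hγ.le
    have h2yγ : ((2:ℝ) ^ y) ^ γ = ((2:ℝ) ^ γ) ^ y := pow_rpow_comm 2 (by norm_num) γ y
    rw [weight_eq γ lam hlam y k hk1]
    refine le_trans ?_ (le_add_of_nonneg_right hb2)
    calc lam ^ y / (Nat.factorial y : ℝ) ^ γ * ((Nat.ascFactorial k y : ℝ) / (k : ℝ) ^ y) ^ γ
        ≤ lam ^ y / (Nat.factorial y : ℝ) ^ γ * ((2:ℝ) ^ γ) ^ y := by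
          rw [h2yγ] at hrg
          exact mul_le_mul_of_nonneg_left hrg (by positivity)
      _ = (2 ^ γ * lam) ^ y / (Nat.factorial y : ℝ) ^ γ := by rw [mul_pow]; ring
  · -- y > k : geometric bound
    have hb1 : (0:ℝ) ≤ (2 ^ γ * lam) ^ y / (Nat.factorial y : ℝ) ^ γ := by positivity
    refine le_trans ?_ (le_add_of_nonneg_left hb1)
    have hcb : ((y + k - 1).choose y : ℝ) ≤ (4:ℝ) ^ y := by
      calc ((y + k - 1).choose y : ℝ) ≤ ((2:ℕ) : ℝ) ^ (y + k - 1) := by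
            exact_mod_cast choose_le_two_pow' (y + k - 1) y
        _ ≤ (2:ℝ) ^ (2*y) := by
            norm_num
            exact pow_le_pow_right₀ (by norm_num) (by omega)
        _ = (4:ℝ) ^ y := by rw [pow_mul]; norm_num
    have hcg : ((y + k - 1).choose y : ℝ) ^ γ ≤ ((4:ℝ) ^ γ) ^ y := by
      calc ((y + k - 1).choose y : ℝ) ^ γ ≤ ((4:ℝ) ^ y) ^ γ :=
            Real.rpow_le_rpow (by positivity) hcb hγ.le
        _ = ((4:ℝ) ^ γ) ^ y := pow_rpow_comm 4 (by norm_num) γ y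
    have hbase : (4:ℝ) ^ γ * (lam * (k : ℝ) ^ (-γ)) ≤ 1/2 := by
      rw [Real.rpow_neg hk0.le]
      rw [mul_comm lam, ← mul_assoc]
      have hkγ : (0:ℝ) < (k:ℝ) ^ γ := by positivity
      rw [mul_comm ((4:ℝ)^γ) _, mul_assoc, inv_mul_le_iff₀ hkγ]
      linarith
    calc ngnbWeight γ k (lam * (k : ℝ) ^ (-γ)) y
        ≤ ((4:ℝ) ^ γ) ^ y * (lam * (k : ℝ) ^ (-γ)) ^ y := by
          unfold ngnbWeight
          exact mul_le_mul_of_nonneg_right hcg (by positivity)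
      _ = ((4:ℝ) ^ γ * (lam * (k : ℝ) ^ (-γ))) ^ y := by simp [mul_pow]
      _ ≤ (1/2) ^ y := pow_le_pow_left₀ (by positivity) hbase y


/-- Let `γ > 0` and `λ > 0`, and set `q_k = λ k^{-γ}` (so that `λ = k^γ q_k` stays fixed).
Then the NGNB(γ,k,q_k) normalizing constants converge to the COM-Poisson(λ,γ)
normalizing constant, and for each fixed `y` the NGNB(γ,k,q_k) probability of `y`
converges to the COM-Poisson(λ,γ) probability of `y`, as `k → ∞`. -/
theorem ngnb_tendsto_comPoisson (γ : ℝ) (hγ : 0 < γ) (lam : ℝ) (hlam : 0 < lam) :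
    Tendsto (fun k : ℕ => ∑' j : ℕ, ngnbWeight γ k (lam * (k : ℝ) ^ (-γ)) j) atTop
      (nhds (∑' j : ℕ, lam ^ j / (Nat.factorial j : ℝ) ^ γ)) ∧
    ∀ y : ℕ,
      Tendsto
        (fun k : ℕ =>
          ngnbWeight γ k (lam * (k : ℝ) ^ (-γ)) y /
            ∑' j : ℕ, ngnbWeight γ k (lam * (k : ℝ) ^ (-γ)) j)
        atTop
        (nhds ((lam ^ y / (Nat.factorial y : ℝ) ^ γ) /
          ∑' j : ℕ, lam ^ j / (Nat.factorial j : ℝ) ^ γ)) := by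
  have hbound : Summable (fun y : ℕ =>
      (2 ^ γ * lam) ^ y / (Nat.factorial y : ℝ) ^ γ + (1/2) ^ y) :=
    (summable_aux γ hγ _ (by positivity)).add (summable_geometric_of_lt_one (by norm_num)
      (by norm_num))
  have h1 : Tendsto (fun k : ℕ => ∑' j : ℕ, ngnbWeight γ k (lam * (k : ℝ) ^ (-γ)) j) atTop
      (nhds (∑' j : ℕ, lam ^ j / (Nat.factorial j : ℝ) ^ γ)) :=
    tendsto_tsum_of_dominated_convergence hbound (fun y => weight_tendsto γ hγ lam hlam y)
      (weight_bound γ hγ lam hlam)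
  refine ⟨h1, fun y => ?_⟩
  have hZsum : Summable (fun j : ℕ => lam ^ j / (Nat.factorial j : ℝ) ^ γ) :=
    summable_aux γ hγ lam hlam
  have hZpos : 0 < ∑' j : ℕ, lam ^ j / (Nat.factorial j : ℝ) ^ γ := by
    have h0 : (1:ℝ) ≤ ∑' j : ℕ, lam ^ j / (Nat.factorial j : ℝ) ^ γ := by
      have := Summable.le_tsum hZsum 0 (fun j _ => by positivity)
      simpa using this
    linarith
  exact (weight_tendsto γ hγ lam hlam y).div h1 (ne_of_gt hZpos)
end

section
/- Let γ ≥ 1 be a positive integer, let k ≥ 1 be a natural number, and let 0 < q < 1. Then Σ_{y=0}^∞ y · (C(y+k-1, y))^γ q^y = q · k^γ · Σ_{j=0}^∞ (C(k+j, j))^γ · q^j / (j+1)^{γ-1}, where both series converge. Consequently the mean of the NGNB(γ,k,q) distribution equals E(Y) = q k^γ · [Σ_{j=0}^∞ (C(k+j, j))^γ q^j/(j+1)^{γ-1}] / [Σ_{j=0}^∞ (C(j+k-1, j))^γ q^j], i.e., E(Y) = q k^γ · _γF_{γ-1}(k+1,…,k+1; 2,…,2; q) / _γF_{γ-1}(k,…,k;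 1,…,1; q). -/
private lemma choose_bound (k j : ℕ) : ((k + j).choose j : ℝ) ≤ (((k+1) : ℝ) * ((j:ℝ)+1)) ^ k := by
  have h1 : (k + j).choose j = (k + j).choose k := by
    have := (Nat.choose_symm (show j ≤ k + j by omega)).symm
    simpa [show k + j - j = k by omega] using this
  have h2 : (k + j).choose k ≤ (k + j) ^ k := Nat.choose_le_pow _ _
  have h3 : ((k:ℝ) + j) ≤ ((k:ℝ)+1) * ((j:ℝ)+1) := by nlinarith [Nat.cast_nonneg (α := ℝ) k, Nat.cast_nonneg (α := ℝ) j]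
  calc ((k + j).choose j : ℝ) ≤ ((k + j : ℕ) : ℝ) ^ k := by
        rw [h1]; exact_mod_cast h2
    _ ≤ (((k+1) : ℝ) * ((j:ℝ)+1)) ^ k := by
        apply pow_le_pow_left₀ (by positivity)
        push_cast; linarith

private lemma summable_aux_s16 (m : ℕ) {q : ℝ} (hq0 : 0 < q) (hq1 : q < 1) :
    Summable (fun j : ℕ => ((j:ℝ)+1) ^ m * q ^ j) := by
  have h : Summable (fun n : ℕ => (n:ℝ) ^ m * q ^ n) :=
    summable_pow_mul_geometric_of_norm_lt_one m (by rwa [Real.norm_eq_abs, abs_of_pos hq0])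
  have h2 : Summable (fun j : ℕ => ((j+1:ℕ):ℝ) ^ m * q ^ (j+1)) :=
    (summable_nat_add_iff 1).mpr h
  have h3 : Summable (fun j : ℕ => q⁻¹ * (((j+1:ℕ):ℝ) ^ m * q ^ (j+1))) := h2.mul_left _
  refine h3.congr fun j => ?_
  push_cast
  field_simp
  ring

private lemma key_eq (γ k : ℕ) (hγ : 1 ≤ γ) (hk : 1 ≤ k) (q : ℝ) (j : ℕ) :
    ((j+1 : ℕ) : ℝ) * (((j+1) + k - 1).choose (j+1) : ℝ) ^ γ * q ^ (j+1)
      = q * (k : ℝ) ^ γ * (((k + j).choose j : ℝ) ^ γ * q ^ j / ((j : ℝ) + 1) ^ (γ - 1)) := by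
  have hidx : (j+1) + k - 1 = k + j := by omega
  rw [hidx]
  have hnat : (k + j).choose (j+1) * (j+1) = (k + j).choose j * k := by
    have := Nat.choose_succ_right_eq (k + j) j
    simpa [Nat.add_sub_cancel_left, show k + j - j = k by omega] using this
  have hcast : ((k + j).choose (j+1) : ℝ) * ((j:ℝ)+1) = ((k + j).choose j : ℝ) * k := by
    exact_mod_cast hnat
  have hj1 : ((j:ℝ)+1) ≠ 0 := by positivity
  have hγ' : γ - 1 + 1 = γ := by omega
  rw [← mul_div_assoc, eq_div_iff (show ((j:ℝ)+1)^(γ-1) ≠ 0 by positivity), ← mul_assoc]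
  have lhs_eq : ((j+1 : ℕ) : ℝ) * (((k + j).choose (j+1) : ℝ)) ^ γ * q ^ (j+1) * ((j:ℝ)+1) ^ (γ-1)
      = (((k + j).choose (j+1) : ℝ) * ((j:ℝ)+1)) ^ γ * q ^ (j+1) := by
    rw [mul_pow, ← hγ', pow_succ]
    push_cast
    ring
  rw [lhs_eq, hcast, mul_pow, pow_succ]
  ring

/-- For a positive integer `γ ≥ 1`, a natural number `k ≥ 1`, and `0 < q < 1`:
`Σ_y y (C(y+k-1, y))^γ q^y = q k^γ Σ_j (C(k+j, j))^γ q^j / (j+1)^{γ-1}`,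
both series converging. Consequently the mean of the NGNB(γ,k,q) distribution is
`E(Y) = q k^γ · _γF_{γ-1}(k+1,…,k+1;2,…,2;q) / _γF_{γ-1}(k,…,k;1,…,1;q)`. -/
theorem ngnb_mean_eq_hypergeometric_ratio (γ : ℕ) (hγ : 1 ≤ γ) (k : ℕ) (hk : 1 ≤ k)
    (q : ℝ) (hq0 : 0 < q) (hq1 : q < 1) :
    Summable (fun y : ℕ => (y : ℝ) * ((y + k - 1).choose y : ℝ) ^ γ * q ^ y) ∧
    Summable (fun j : ℕ => ((k + j).choose j : ℝ) ^ γ * q ^ j / ((j : ℝ) + 1) ^ (γ - 1)) ∧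
    (∑' y : ℕ, (y : ℝ) * ((y + k - 1).choose y : ℝ) ^ γ * q ^ y) =
      q * (k : ℝ) ^ γ *
        ∑' j : ℕ, ((k + j).choose j : ℝ) ^ γ * q ^ j / ((j : ℝ) + 1) ^ (γ - 1) ∧
    (∑' y : ℕ, (y : ℝ) * ((y + k - 1).choose y : ℝ) ^ γ * q ^ y) /
        (∑' j : ℕ, ((j + k - 1).choose j : ℝ) ^ γ * q ^ j) =
      q * (k : ℝ) ^ γ *
        (∑' j : ℕ, ((k + j).choose j : ℝ) ^ γ * q ^ j / ((j : ℝ) + 1) ^ (γ - 1)) /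
        ∑' j : ℕ, ((j + k - 1).choose j : ℝ) ^ γ * q ^ j := by
  -- summability of the j-series
  have hg : Summable (fun j : ℕ => ((k + j).choose j : ℝ) ^ γ * q ^ j / ((j : ℝ) + 1) ^ (γ - 1)) := by
    have hmaj : Summable (fun j : ℕ => ((k:ℝ)+1) ^ (k*γ) * (((j:ℝ)+1) ^ (k*γ) * q ^ j)) :=
      (summable_aux_s16 (k*γ) hq0 hq1).mul_left _
    apply Summable.of_nonneg_of_le (fun j => by positivity) _ hmaj
    intro j
    have hb := choose_bound k j
    have h1 : ((k + j).choose j : ℝ) ^ γ ≤ (((k:ℝ)+1) * ((j:ℝ)+1)) ^ (k*γ) := by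
      rw [pow_mul]
      exact pow_le_pow_left₀ (by positivity) hb γ
    have h2 : ((k + j).choose j : ℝ) ^ γ * q ^ j / ((j : ℝ) + 1) ^ (γ - 1)
        ≤ ((k + j).choose j : ℝ) ^ γ * q ^ j := by
      apply div_le_self (by positivity)
      exact one_le_pow₀ (by linarith [Nat.cast_nonneg (α := ℝ) j])
    calc ((k + j).choose j : ℝ) ^ γ * q ^ j / ((j : ℝ) + 1) ^ (γ - 1)
        ≤ ((k + j).choose j : ℝ) ^ γ * q ^ j := h2
      _ ≤ (((k:ℝ)+1) * ((j:ℝ)+1)) ^ (k*γ) * q ^ j := by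
          apply mul_le_mul_of_nonneg_right h1 (by positivity)
      _ = ((k:ℝ)+1) ^ (k*γ) * (((j:ℝ)+1) ^ (k*γ) * q ^ j) := by rw [mul_pow]; ring
  -- the shifted first series equals q k^γ times the j-series, pointwise
  have hshift : ∀ j : ℕ,
      (((j+1:ℕ)) : ℝ) * (((j+1) + k - 1).choose (j+1) : ℝ) ^ γ * q ^ (j+1)
        = q * (k : ℝ) ^ γ * (((k + j).choose j : ℝ) ^ γ * q ^ j / ((j : ℝ) + 1) ^ (γ - 1)) :=
    key_eq γ k hγ hk q
  have hgs : Summable (fun j : ℕ =>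
      q * (k : ℝ) ^ γ * (((k + j).choose j : ℝ) ^ γ * q ^ j / ((j : ℝ) + 1) ^ (γ - 1))) :=
    hg.mul_left _
  have hfshift : Summable (fun j : ℕ =>
      (((j+1:ℕ)) : ℝ) * (((j+1) + k - 1).choose (j+1) : ℝ) ^ γ * q ^ (j+1)) :=
    hgs.congr fun j => (hshift j).symm
  have hf : Summable (fun y : ℕ => (y : ℝ) * ((y + k - 1).choose y : ℝ) ^ γ * q ^ y) := by
    rw [← summable_nat_add_iff 1]
    exact hfshift.congr fun j => by push_cast; ring_nf
  refine ⟨hf, hg, ?_, ?_⟩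
  · have h0 : ∑' y : ℕ, (y : ℝ) * ((y + k - 1).choose y : ℝ) ^ γ * q ^ y
        = (0 : ℝ) * ((0 + k - 1).choose 0 : ℝ) ^ γ * q ^ 0
          + ∑' j : ℕ, (((j+1:ℕ)) : ℝ) * (((j+1) + k - 1).choose (j+1) : ℝ) ^ γ * q ^ (j+1) := by
      rw [Summable.tsum_eq_zero_add hf]
      push_cast
      ring_nf
    rw [h0]
    simp only [hshift]
    rw [tsum_mul_left]
    ring
  · have h3 : (∑' y : ℕ, (y : ℝ) * ((y + k - 1).choose y : ℝ) ^ γ * q ^ y) =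
      q * (k : ℝ) ^ γ *
        ∑' j : ℕ, ((k + j).choose j : ℝ) ^ γ * q ^ j / ((j : ℝ) + 1) ^ (γ - 1) := by
      have h0 : ∑' y : ℕ, (y : ℝ) * ((y + k - 1).choose y : ℝ) ^ γ * q ^ y
          = (0 : ℝ) * ((0 + k - 1).choose 0 : ℝ) ^ γ * q ^ 0
            + ∑' j : ℕ, (((j+1:ℕ)) : ℝ) * (((j+1) + k - 1).choose (j+1) : ℝ) ^ γ * q ^ (j+1) := by
        rw [Summable.tsum_eq_zero_add hf]
        push_cast
        ring_nf
      rw [h0]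
      simp only [hshift]
      rw [tsum_mul_left]
      ring
    rw [h3]
end
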